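/- (Abstract supersimulator with expanding distinguisher families) Let X be a nonempty finite type, D a distribution on X, g : X → [0,1], ε ∈ (0, 1/2), ε' ∈ (0, ε²/8], and let (𝓕_j)_{j∈ℕ} be an arbitrary sequence of families of functions X → [0,1]. Then there exist a natural number i ≤ 1/(3ε²), functions φ_0, …, φ_{i−1} : X → ℝ with (φ_j ∈ 𝓕_j or −φ_j ∈ 𝓕_j) for each j < i, and functions h_0, …, h_i : X → [0,1] with h_0(x) = 1/2 for all x and |h_{j+1}(x) − clamp(h_j(x) + ε·φ_j(x))| ≤ ε'/2 for all j < i and x ∈ X, such that h_i is (𝓕_i, ε)-regular for g under D. -/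
import Mathlib


/-- Expectation of `f` under the (finitely supported) distribution `D`. -/
noncomputable def expect {X : Type*} [Fintype X] (D f : X → ℝ) : ℝ := ∑ x, D x * f x

/-- `D` is a probability distribution on the finite type `X`. -/
def IsDist {X : Type*} [Fintype X] (D : X → ℝ) : Prop := (∀ x, 0 ≤ D x) ∧ ∑ x, D x = 1

/-- Projection of a real number onto the unit interval. -/
noncomputable def clamp (t : ℝ) : ℝ := min 1 (max 0 t)

section aux
open scoped Classical

variable {X : Type*} [Fintype X]

lemma expect_mono {D f f' : X → ℝ} (hD : ∀ x, 0 ≤ D x) (h : ∀ x, f x ≤ f' x) :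
    expect D f ≤ expect D f' :=
  Finset.sum_le_sum fun x _ => mul_le_mul_of_nonneg_left (h x) (hD x)

lemma expect_nonneg {D f : X → ℝ} (hD : ∀ x, 0 ≤ D x) (h : ∀ x, 0 ≤ f x) :
    0 ≤ expect D f :=
  Finset.sum_nonneg fun x _ => mul_nonneg (hD x) (h x)

lemma expect_le_const {D f : X → ℝ} (hD : IsDist D) (c : ℝ) (h : ∀ x, f x ≤ c) :
    expect D f ≤ c := by
  calc expect D f ≤ expect D (fun _ => c) := expect_mono hD.1 h
    _ = c := by
      simp only [expect, ← Finset.sum_mul, hD.2, one_mul]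

lemma clamp_mem (t : ℝ) : clamp t ∈ Set.Icc (0:ℝ) 1 := by
  unfold clamp
  constructor
  · exact le_min zero_le_one (le_max_left 0 t)
  · exact min_le_left 1 _

lemma clamp_sq_le {a t : ℝ} (ha : a ∈ Set.Icc (0:ℝ) 1) : (a - clamp t)^2 ≤ (a - t)^2 := by
  obtain ⟨h0, h1⟩ := ha
  unfold clamp
  rcases le_total t 0 with h | h
  · rw [max_eq_left h, min_eq_right zero_le_one]
    nlinarith
  · rw [max_eq_right h]
    rcases le_total t 1 with h' | h'
    · rw [min_eq_right h']
    · rw [min_eq_left h']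
      nlinarith

/-- choose a distinguisher (or its negation) with positive correlation. -/
noncomputable def phiOf (D g : X → ℝ) (ε : ℝ) (F : Set (X → ℝ)) (h : X → ℝ) : X → ℝ :=
  if hc : ∃ f ∈ F, ε < |expect D (fun x => f x * (g x - h x))| then
    if 0 ≤ expect D (fun x => hc.choose x * (g x - h x)) then hc.choose
    else (fun x => -(hc.choose x))
  else 0

lemma phiOf_spec {D g : X → ℝ} {ε : ℝ} {F : Set (X → ℝ)} {h : X → ℝ}
    (hc : ∃ f ∈ F, ε < |expect D (fun x => f x * (g x - h x))|)
    (hF : ∀ f ∈ F, ∀ x, f x ∈ Set.Icc (0:ℝ) 1) :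
    (phiOf D g ε F h ∈ F ∨ (fun x => -(phiOf D g ε F h x)) ∈ F) ∧
    (∀ x, |phiOf D g ε F h x| ≤ 1) ∧
    ε < expect D (fun x => phiOf D g ε F h x * (g x - h x)) := by
  have hmem := hc.choose_spec.1
  have habs := hc.choose_spec.2
  have hb : ∀ x, |hc.choose x| ≤ 1 := by
    intro x
    have := hF _ hmem x
    rw [abs_le]; constructor <;> [linarith [this.1]; exact this.2]
  unfold phiOf
  rw [dif_pos hc]
  split_ifs with hpos
  · refine ⟨Or.inl hmem, hb, ?_⟩
    rwa [abs_of_nonneg hpos] at habs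
  · push_neg at hpos
    have hneg : expect D (fun x => (-(hc.choose x)) * (g x - h x)) =
        -expect D (fun x => hc.choose x * (g x - h x)) := by
      simp [expect, ← Finset.sum_neg_distrib, neg_mul, mul_neg]
    refine ⟨Or.inr (by simpa using hmem), fun x => by simpa using hb x, ?_⟩
    rw [hneg]
    rwa [abs_of_neg hpos] at habs

/-- the iterated sequence of approximators. -/
noncomputable def hSeq (D g : X → ℝ) (ε : ℝ) (𝓕 : ℕ → Set (X → ℝ)) : ℕ → X → ℝ
  | 0 => fun _ => 1/2
  | j+1 => fun x =>
      clamp (hSeq D g ε 𝓕 j x + ε * phiOf D g ε (𝓕 j) (hSeq D g ε 𝓕 j) x)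

end aux

theorem stmt_7 {X : Type*} [Fintype X] [Nonempty X]
    (D : X → ℝ) (hD : IsDist D)
    (g : X → ℝ) (hg : ∀ x, g x ∈ Set.Icc (0:ℝ) 1)
    (ε ε' : ℝ) (hε : ε ∈ Set.Ioo (0:ℝ) (1/2)) (hε' : ε' ∈ Set.Ioc (0:ℝ) (ε ^ 2 / 8))
    (𝓕 : ℕ → Set (X → ℝ)) (h𝓕 : ∀ j, ∀ f ∈ 𝓕 j, ∀ x, f x ∈ Set.Icc (0:ℝ) 1) :
    ∃ (i : ℕ) (φ : ℕ → X → ℝ) (h : ℕ → X → ℝ),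
      (i : ℝ) ≤ 1 / (3 * ε ^ 2) ∧
      (∀ j < i, φ j ∈ 𝓕 j ∨ (fun x => -(φ j x)) ∈ 𝓕 j) ∧
      (∀ x, h 0 x = 1/2) ∧
      (∀ j ≤ i, ∀ x, h j x ∈ Set.Icc (0:ℝ) 1) ∧
      (∀ j < i, ∀ x, |h (j+1) x - clamp (h j x + ε * φ j x)| ≤ ε' / 2) ∧
      (∀ f ∈ 𝓕 i, |expect D (fun x => f x * (g x - h i x))| ≤ ε) := by
  classical
  obtain ⟨hε0, hε12⟩ := hε
  set h : ℕ → X → ℝ := hSeq D g ε 𝓕 with hh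
  set φ : ℕ → X → ℝ := fun j => phiOf D g ε (𝓕 j) (h j) with hφ
  set e : ℕ → ℝ := fun j => expect D (fun x => (g x - h j x)^2) with he
  -- bad j: not regular
  set Bad : ℕ → Prop := fun j => ∃ f ∈ 𝓕 j, ε < |expect D (fun x => f x * (g x - h j x))|
    with hBad
  have hmem : ∀ j, ∀ x, h j x ∈ Set.Icc (0:ℝ) 1 := by
    intro j x
    cases j with
    | zero => simp [hh, hSeq]; norm_num
    | succ n => exact clamp_mem _
  -- energy bounds
  have he0 : e 0 ≤ 1/4 := by
    apply expect_le_const hD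
    intro x
    have := (hg x).1; have := (hg x).2
    have : h 0 x = 1/2 := by simp [hh, hSeq]
    nlinarith [(hg x).1, (hg x).2]
  have heNonneg : ∀ j, 0 ≤ e j :=
    fun j => expect_nonneg hD.1 (fun x => sq_nonneg _)
  -- energy decrement on bad steps
  have hdec : ∀ j, Bad j → e (j+1) ≤ e j - ε^2 := by
    intro j hj
    obtain ⟨hφmem, hφb, hφcorr⟩ := phiOf_spec hj (h𝓕 j)
    have step1 : e (j+1) ≤ expect D (fun x => (g x - h j x - ε * φ j x)^2) := by
      apply expect_mono hD.1
      intro x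
      have := clamp_sq_le (t := h j x + ε * φ j x) (hg x)
      have hsucc : h (j+1) x = clamp (h j x + ε * φ j x) := by
        simp [hh, hSeq, hφ]
      rw [hsucc]
      calc (g x - clamp (h j x + ε * φ j x))^2
          ≤ (g x - (h j x + ε * φ j x))^2 := this
        _ = (g x - h j x - ε * φ j x)^2 := by ring
    have expand : expect D (fun x => (g x - h j x - ε * φ j x)^2) =
        e j - 2 * ε * expect D (fun x => φ j x * (g x - h j x))
          + ε^2 * expect D (fun x => (φ j x)^2) := by
      simp only [he, expect, Finset.mul_sum, ← Finset.sum_sub_distrib, ← Finset.sum_add_distrib]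
      apply Finset.sum_congr rfl
      intro x _
      ring
    have hsq : expect D (fun x => (φ j x)^2) ≤ 1 := by
      apply expect_le_const hD
      intro x
      have := hφb x
      nlinarith [abs_nonneg (φ j x), sq_abs (φ j x)]
    calc e (j+1) ≤ e j - 2 * ε * expect D (fun x => φ j x * (g x - h j x))
          + ε^2 * expect D (fun x => (φ j x)^2) := by rw [← expand]; exact step1
      _ ≤ e j - 2 * ε * ε + ε^2 * 1 := by
          have h1 : 2 * ε * ε ≤ 2 * ε * expect D (fun x => φ j x * (g x - h j x)) :=
            mul_le_mul_of_nonneg_left hφcorr.le (by linarith)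
          have h2 : ε^2 * expect D (fun x => (φ j x)^2) ≤ ε^2 * 1 :=
            mul_le_mul_of_nonneg_left hsq (sq_nonneg ε)
          linarith
      _ = e j - ε^2 := by ring
  -- termination
  have hterm : ∃ j, ¬ Bad j := by
    by_contra hcon
    push_neg at hcon
    have key : ∀ j, e j ≤ 1/4 - j * ε^2 := by
      intro j
      induction j with
      | zero => simpa using he0
      | succ n ih =>
        have := hdec n (hcon n)
        push_cast
        push_cast at ih
        linarith
    obtain ⟨j, hj⟩ := exists_nat_gt (1 / (4 * ε^2))
    have h1 := key j
    have h2 := heNonneg j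
    have hε2 : 0 < ε^2 := by positivity
    have : 1 / (4 * ε^2) * (4 * ε^2) < (j:ℝ) * (4 * ε^2) := by
      apply mul_lt_mul_of_pos_right hj; positivity
    rw [div_mul_cancel₀] at this
    · nlinarith
    · positivity
  set i := Nat.find hterm with hi
  have hireg : ¬ Bad i := Nat.find_spec hterm
  have hbadlt : ∀ j < i, Bad j := fun j hj => by
    by_contra hcon
    exact absurd (Nat.find_le hcon) (not_le.mpr hj)
  -- bound on i
  have key : ∀ n, (∀ j < n, Bad j) → e n ≤ 1/4 - n * ε^2 := by
    intro n
    induction n with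
    | zero => intro _; simpa using he0
    | succ m ih =>
      intro hm
      have h1 := ih (fun j hj => hm j (Nat.lt_succ_of_lt hj))
      have h2 := hdec m (hm m (Nat.lt_succ_self m))
      push_cast
      push_cast at h1
      linarith
  have hei : e i ≤ 1/4 - i * ε^2 := key i hbadlt
  have hibound : (i : ℝ) ≤ 1 / (3 * ε ^ 2) := by
    have h2 := heNonneg i
    have hε2 : (0:ℝ) < ε^2 := by positivity
    have h3 : (i:ℝ) * ε^2 ≤ 1/4 := by linarith
    rw [le_div_iff₀ (by positivity)]
    nlinarith
  refine ⟨i, φ, h, hibound, ?_, ?_, fun j _ x => hmem j x, ?_, ?_⟩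
  · intro j hj
    exact (phiOf_spec (hbadlt j hj) (h𝓕 j)).1
  · intro x; simp [hh, hSeq]
  · intro j hj x
    have : h (j+1) x = clamp (h j x + ε * φ j x) := by simp [hh, hSeq, hφ]
    rw [this, sub_self, abs_zero]
    linarith [hε'.1]
  · intro f hf
    by_contra hcon
    push_neg at hcon
    exact hireg ⟨f, hf, hcon⟩
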